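/- arXiv:2008.08411 — 3 statements merged into one kernel-verified Lean document; each statement's English description precedes it below -/
import Mathlib

section
/- Let G₁ and G₂ be groups and let H be a subgroup of G₁ × G₂ such that both coordinate projections H → G₁ and H → G₂ are surjective. Suppose that G₂ is solvable and that G₁ admits a unique maximal proper normal subgroup N such that the quotient G₁/N is non-solvable. Then H = G₁ × G₂. -/
/-!
By Goursat's lemma `G₁ ⧸ H.goursatFst ≃* G₂ ⧸ H.goursatSnd`, so `G₁ ⧸ H.goursatFst` is solvable.
The normal subgroup `H.goursatFst` cannot be proper: it would lie in `N`, making `G₁ ⧸ N` a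
solvable quotient. Hence `G₁ × 1 ≤ H`, and with the surjectivity of `H → G₂` this gives `H = ⊤`.
-/

open Function

lemma Subgroup.surjective_comp_subtype_iff_map_eq_top {G K : Type*} [Group G] [Group K]
    (I : Subgroup G) (f : G →* K) : Surjective (f ∘ I.subtype) ↔ I.map f = ⊤ := by
  rw [← MonoidHom.coe_comp, ← MonoidHom.range_eq_top, MonoidHom.range_comp, range_subtype]

namespace Subgroup

variable {G₁ G₂ : Type*} [Group G₁] [Group G₂] {I : Subgroup (G₁ × G₂)}

lemma isSolvable_quotient_goursatFst [Group.IsSolvable G₂]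
    (hI₁ : Surjective (Prod.fst ∘ I.subtype))
    (hI₂ : Surjective (Prod.snd ∘ I.subtype)) :
    have := normal_goursatFst hI₁
    Group.IsSolvable (G₁ ⧸ I.goursatFst) := by
  intro
  have := normal_goursatSnd hI₂
  obtain ⟨e, -⟩ := goursat_surjective hI₁ hI₂
  exact Group.isSolvable_of_surjective (f := e.symm.toMonoidHom.comp (QuotientGroup.mk' _))
    (e.symm.surjective.comp (QuotientGroup.mk'_surjective _))

lemma eq_top_of_goursatFst_eq_top (hI₂ : Surjective (Prod.snd ∘ I.subtype))
    (h : I.goursatFst = ⊤) : I = ⊤ := by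
  refine eq_top_iff.2 fun ⟨g₁, g₂⟩ _ ↦ ?_
  obtain ⟨⟨⟨x, _⟩, hx⟩, rfl⟩ := hI₂ g₂
  have hg : (g₁ * x⁻¹, (1 : G₂)) ∈ I := mem_goursatFst.1 (h ▸ mem_top _)
  simpa using mul_mem hg hx

end Subgroup

lemma QuotientGroup.isSolvable_of_le {G : Type*} [Group G] {M N : Subgroup G} [M.Normal]
    [N.Normal] (hMN : M ≤ N) [Group.IsSolvable (G ⧸ M)] :
    Group.IsSolvable (G ⧸ N) :=
  Group.isSolvable_of_surjective <|
    map_surjective_of_surjective M N (MonoidHom.id G) (mk'_surjective N) (by simpa using hMN)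

theorem stmt_5_general {G₁ G₂ : Type*} [Group G₁] [Group G₂] [Group.IsSolvable G₂]
    (H : Subgroup (G₁ × G₂))
    (h1 : Subgroup.map (MonoidHom.fst G₁ G₂) H = ⊤)
    (h2 : Subgroup.map (MonoidHom.snd G₁ G₂) H = ⊤)
    (N : Subgroup G₁) [N.Normal]
    (hmax : ∀ M : Subgroup G₁, M.Normal → M ≠ ⊤ → M ≤ N)
    (hns : ¬ IsSolvable (G₁ ⧸ N)) :
    H = ⊤ := by
  have hfst := (H.surjective_comp_subtype_iff_map_eq_top (MonoidHom.fst G₁ G₂)).2 h1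
  have hsnd := (H.surjective_comp_subtype_iff_map_eq_top (MonoidHom.snd G₁ G₂)).2 h2
  by_cases htop : H.goursatFst = ⊤
  · exact Subgroup.eq_top_of_goursatFst_eq_top hsnd htop
  · have hnormal := Subgroup.normal_goursatFst hfst
    have := Subgroup.isSolvable_quotient_goursatFst hfst hsnd
    exact absurd (QuotientGroup.isSolvable_of_le (hmax _ hnormal htop)) hns

theorem stmt_5 {G₁ G₂ : Type*} [Group G₁] [Group G₂] [Group.IsSolvable G₂]
    (H : Subgroup (G₁ × G₂))
    (h1 : Subgroup.map (MonoidHom.fst G₁ G₂) H = ⊤)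
    (h2 : Subgroup.map (MonoidHom.snd G₁ G₂) H = ⊤)
    (N : Subgroup G₁) [N.Normal] (hNtop : N ≠ ⊤)
    (hmax : ∀ M : Subgroup G₁, M.Normal → M ≠ ⊤ → M ≤ N)
    (hns : ¬ IsSolvable (G₁ ⧸ N)) :
    H = ⊤ :=
  stmt_5_general H h1 h2 N hmax hns
end

section
/- Let p ≥ 5 be a prime, let G be a group, let H ⊴ G be a normal subgroup such that the quotient G/H is abelian, and let ρ : G → GL₂(𝔽_p) be a group homomorphism whose image contains SL₂(𝔽_p). Then the image ρ(H) also contains SL₂(𝔽_p). -/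
/-!
Since `G ⧸ H` is abelian, `H` contains the commutator subgroup of `G`, so `ρ(H)` contains every
commutator of `ρ(G)`. For `p ≥ 5` the group `SL₂(𝔽_p)` is perfect: conjugation by
`diag(2, 2⁻¹)` sends a transvection `E(t)` to `E(4t)`, so `E(3t)` is a commutator. Hence every element of
`SL₂(𝔽_p) ≤ ρ(G)` is a product of commutators of `ρ(G)` and lies in `ρ(H)`.
-/

open scoped MatrixGroups

theorem Subgroup.le_map_of_le_range_of_isPerfect {G M : Type*} [Group G] [Group M]
    (ρ : G →* M) {H : Subgroup G} (hH : _root_.commutator G ≤ H)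
    (S : Subgroup M) [Group.IsPerfect S] (hS : S ≤ ρ.range) : S ≤ H.map ρ :=
  calc S = ⁅S, S⁆ := S.commutator_eq_self.symm
    _ ≤ ⁅ρ.range, ρ.range⁆ := commutator_mono hS hS
    _ = (_root_.commutator G).map ρ := (map_commutator_eq G ρ).symm
    _ ≤ H.map ρ := map_mono hH

theorem ZMod.natCast_ne_zero_of_pos_of_lt {p n : ℕ} (hn : 0 < n) (hnp : n < p) :
    (n : ZMod p) ≠ 0 := by
  rw [Ne, ZMod.natCast_eq_zero_iff]
  exact Nat.not_dvd_of_pos_of_lt hn hnp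

theorem Matrix.SL2.isPerfect_zmod {p : ℕ} [Fact p.Prime] (hp : 5 ≤ p) :
    Group.IsPerfect SL(2, ZMod p) := by
  have two_ne_zero : (2 : ZMod p) ≠ 0 := by
    exact_mod_cast ZMod.natCast_ne_zero_of_pos_of_lt (p := p) (n := 2) (by norm_num) (by omega)
  have two_sq_ne_one : (2 : ZMod p) ^ 2 ≠ 1 := by
    have three_ne_zero : ((3 : ℕ) : ZMod p) ≠ 0 :=
      ZMod.natCast_ne_zero_of_pos_of_lt (by norm_num) (by omega)
    contrapose! three_ne_zero
    push_cast
    linear_combination three_ne_zero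
  exact ⟨Matrix.SL2.commutator_eq_top two_ne_zero two_sq_ne_one⟩

theorem stmt_7 (p : ℕ) [Fact p.Prime] (hp : 5 ≤ p)
    {G : Type*} [Group G] (H : Subgroup G) [H.Normal]
    (hab : ∀ x y : G ⧸ H, x * y = y * x)
    (ρ : G →* Matrix.GeneralLinearGroup (Fin 2) (ZMod p))
    (hfull : (Matrix.SpecialLinearGroup.toGL (n := Fin 2) (R := ZMod p)).range ≤ ρ.range) :
    (Matrix.SpecialLinearGroup.toGL (n := Fin 2) (R := ZMod p)).range ≤ Subgroup.map ρ H := by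
  have hcomm : IsMulCommutative (G ⧸ H) := ⟨⟨hab⟩⟩
  have := Matrix.SL2.isPerfect_zmod hp
  have := Group.IsPerfect.range (Matrix.SpecialLinearGroup.toGL (n := Fin 2) (R := ZMod p))
  exact Subgroup.le_map_of_le_range_of_isPerfect ρ
    (Subgroup.Normal.quotient_commutative_iff_commutator_le.mp hcomm) _ hfull
end

section
/- Let R be an integral domain, let M and N be free R-modules of the same finite rank, and let f : M → N and g : N → M be R-linear maps such that g ∘ f = c · id_M for some nonzero c ∈ R. Then also f ∘ g = c · id_N, the cokernel of f is annihilated by c, and in particular f is an isomorphism whenever c is a unit of R. -/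
theorem stmt_14 {R M N : Type*} [CommRing R] [IsDomain R]
    [AddCommGroup M] [Module R M] [AddCommGroup N] [Module R N]
    [Module.Free R M] [Module.Finite R M] [Module.Free R N] [Module.Finite R N]
    (hrank : Module.finrank R M = Module.finrank R N)
    (f : M →ₗ[R] N) (g : N →ₗ[R] M) (c : R) (hc : c ≠ 0)
    (hgf : g ∘ₗ f = c • LinearMap.id) :
    f ∘ₗ g = c • LinearMap.id ∧ (∀ y : N, c • y ∈ LinearMap.range f) ∧
      (IsUnit c → Function.Bijective f) := by
  classical
  -- Set up bases and matrices
  set bM := Module.Free.chooseBasis R M with hbM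
  set bN := Module.Free.chooseBasis R N with hbN
  set ιM := Module.Free.ChooseBasisIndex R M
  set ιN := Module.Free.ChooseBasisIndex R N
  have hcard : Fintype.card ιM = Fintype.card ιN := by
    rw [← Module.finrank_eq_card_chooseBasisIndex, ← Module.finrank_eq_card_chooseBasisIndex,
      hrank]
  obtain ⟨e⟩ : Nonempty (ιM ≃ ιN) := ⟨Fintype.equivOfCardEq hcard⟩
  set A := LinearMap.toMatrix bM bN f with hA
  set B := LinearMap.toMatrix bN bM g with hB
  have hBA : B * A = LinearMap.toMatrix bM bM (g ∘ₗ f) :=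
    (LinearMap.toMatrix_comp bM bN bM g f).symm
  have hAB : A * B = LinearMap.toMatrix bN bN (f ∘ₗ g) :=
    (LinearMap.toMatrix_comp bN bM bN f g).symm
  have hdetBA : (B * A).det = c ^ Fintype.card ιM := by
    rw [hBA, hgf]
    have : LinearMap.toMatrix bM bM (c • (LinearMap.id : M →ₗ[R] M))
        = c • (1 : Matrix ιM ιM R) := by
      rw [map_smul, LinearMap.toMatrix_id]
    rw [this, Matrix.det_smul, Matrix.det_one, mul_one]
  -- det (A * B) = det (B * A) via reindexing to square matrices
  have hdetAB : (A * B).det = c ^ Fintype.card ιM := by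
    have h1 : (A.submatrix id ⇑e.symm) * (B.submatrix ⇑e.symm id) = A * B := by
      rw [Matrix.submatrix_mul_equiv A B id e.symm id, Matrix.submatrix_id_id]
    have h2 : (B.submatrix ⇑e.symm id) * (A.submatrix id ⇑e.symm)
        = (B * A).submatrix ⇑e.symm ⇑e.symm := by
      have h2' := Matrix.submatrix_mul_equiv B A e.symm (Equiv.refl ιN) e.symm
      simpa using h2'
    calc (A * B).det = ((A.submatrix id ⇑e.symm) * (B.submatrix ⇑e.symm id)).det := by
          rw [h1]
      _ = ((B.submatrix ⇑e.symm id) * (A.submatrix id ⇑e.symm)).det := by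
          rw [Matrix.det_mul, Matrix.det_mul, mul_comm]
      _ = (B * A).det := by rw [h2, Matrix.det_submatrix_equiv_self]
      _ = c ^ Fintype.card ιM := hdetBA
  have hdet_ne : (A * B).det ≠ 0 := hdetAB ▸ pow_ne_zero _ hc
  -- f ∘ g is injective
  have hinj : Function.Injective (f ∘ₗ g) := by
    rw [← LinearMap.ker_eq_bot, LinearMap.ker_eq_bot']
    intro y hy
    have hv : (A * B).mulVec (bN.repr y) = 0 := by
      have := LinearMap.toMatrix_mulVec_repr bN bN (f ∘ₗ g) y
      rw [← hAB] at this
      rw [this, hy, map_zero]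
      rfl
    have : (bN.repr y : ιN → R) = 0 := Matrix.eq_zero_of_mulVec_eq_zero hdet_ne hv
    have hrepr : bN.repr y = bN.repr 0 := by ext i; simpa using congrFun this i
    exact bN.repr.injective hrepr
  -- f ∘ g = c • id
  have hfg : f ∘ₗ g = c • LinearMap.id := by
    ext y
    have key : (f ∘ₗ g) ((f ∘ₗ g) y - c • y) = 0 := by
      have h1 : g (f (g y)) = c • g y := by
        have := congrArg (fun h => h (g y)) hgf
        simpa using this
      simp only [LinearMap.comp_apply, map_sub, map_smul, h1]
      simp
    have := hinj (a₁ := (f ∘ₗ g) y - c • y) (a₂ := 0) (by simpa using key)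
    have h0 : (f ∘ₗ g) y - c • y = 0 := this
    have := sub_eq_zero.mp h0
    simpa using this
  refine ⟨hfg, fun y => ?_, fun hcu => ?_⟩
  · have : f (g y) = c • y := by
      have := congrArg (fun h => h y) hfg
      simpa using this
    exact ⟨g y, this⟩
  · constructor
    · intro x₁ x₂ hx
      have h1 : g (f x₁) = g (f x₂) := by rw [hx]
      have h2 : c • x₁ = c • x₂ := by
        have e1 := congrArg (fun h => h x₁) hgf
        have e2 := congrArg (fun h => h x₂) hgf
        simp only [LinearMap.comp_apply, LinearMap.smul_apply, LinearMap.id_apply] at e1 e2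
        rw [← e1, ← e2, h1]
      have : c • (x₁ - x₂) = 0 := by rw [smul_sub, h2, sub_self]
      rcases smul_eq_zero.mp this with h | h
      · exact absurd h hc
      · exact sub_eq_zero.mp h
    · intro y
      obtain ⟨u, hu⟩ := hcu
      refine ⟨g (u⁻¹ • y), ?_⟩
      have : f (g (u⁻¹ • y)) = c • (u⁻¹ • y) := by
        have := congrArg (fun h => h ((u⁻¹ : Rˣ) • y)) hfg
        simpa using this
      rw [this, Units.smul_def, smul_smul, ← hu, Units.mul_inv, one_smul]
end
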